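/- arXiv:0910.0487 — 3 statements merged into one kernel-verified Lean document; each statement's English description precedes it below -/
import Mathlib

section
/- If N is a symmetric positive semidefinite n×n real matrix with 3-dimensional kernel spanned by the orthonormal columns of an n×3 matrix e, and R is a symmetric n×n matrix such that K(m) := m·N + R is symmetric positive definite for all sufficiently large m, then K(m)^{-1} = e·η^{-1}·e^t + O(m^{-1}) as m → ∞, where η := e^t·R·e (assumed invertible); i.e., there exist constants C, m₀ > 0 such that ‖K(m)^{-1} − e η^{-1} e^t‖ ≤ C/m for all m ≥ m₀. -/
/-!
Put `P = e η⁻¹ eᵀ`. Then `N P = 0` and `eᵀ (1 - R P) = 0`, so the columns of `1 - R P` are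
orthogonal to `ker N = range e`; as `N` is symmetric they lie in `range N`, i.e. `1 - R P = N W`.
For `B = K(m)⁻¹` this gives `m (B - P) = B (m N) W = (1 - B R) W`, that is
`m D = (W - P R W) - D R W` with `D = B - P`. Once `m ≥ 2 ‖R W‖` the last term absorbs at most
half of `m ‖D‖`, so `‖D‖ ≤ 2 ‖W - P R W‖ / m`; no a priori bound on `‖K(m)⁻¹‖` is needed.
-/

open Matrix

attribute [local instance] Matrix.linftyOpNormedAddCommGroup Matrix.linftyOpNormedRing
  Matrix.linftyOpNormedSpace

namespace Matrix

variable {n k p : Type*} [Fintype n] [DecidableEq n]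

theorem IsHermitian.exists_mulVec_eq {A : Matrix n n ℝ} (hA : A.IsHermitian) {x : n → ℝ}
    (hx : ∀ y, A *ᵥ y = 0 → y ⬝ᵥ x = 0) : ∃ w, A *ᵥ w = x := by
  have hT := isSymmetric_toEuclideanLin_iff.mpr hA
  have hrange : LinearMap.range A.toEuclideanLin = (LinearMap.ker A.toEuclideanLin)ᗮ := by
    rw [← hT.orthogonal_range, Submodule.orthogonal_orthogonal]
  have hmem : WithLp.toLp 2 x ∈ LinearMap.range A.toEuclideanLin := by
    rw [hrange, Submodule.mem_orthogonal]
    intro u hu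
    rw [EuclideanSpace.inner_eq_star_dotProduct, star_trivial, dotProduct_comm]
    exact hx _ (congrArg WithLp.ofLp hu)
  obtain ⟨w, hw⟩ := hmem
  exact ⟨WithLp.ofLp w, congrArg WithLp.ofLp hw⟩

theorem IsHermitian.exists_mul_eq_of_transpose_mul_eq_zero [Fintype k] [Fintype p]
    [DecidableEq p] {A : Matrix n n ℝ} (hA : A.IsHermitian) {e : Matrix n k ℝ}
    (hker : ∀ x, A *ᵥ x = 0 → ∃ c, x = e *ᵥ c) {M : Matrix n p ℝ} (hM : eᵀ * M = 0) :
    ∃ W : Matrix n p ℝ, A * W = M := by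
  have hcol : ∀ j, ∃ w, A *ᵥ w = M *ᵥ Pi.single j 1 := fun j => by
    refine hA.exists_mulVec_eq fun y hy => ?_
    obtain ⟨c, rfl⟩ := hker y hy
    rw [dotProduct_comm, dotProduct_mulVec, ← mulVec_transpose, mulVec_mulVec, hM,
      zero_mulVec, zero_dotProduct]
  choose w hw using hcol
  refine ⟨(of w)ᵀ, ext_of_mulVec_single fun j => ?_⟩
  rw [← mulVec_mulVec, mulVec_single_one, col_transpose]
  exact hw j

theorem smul_inv_smul_add_sub {𝕜 : Type*} [CommRing 𝕜] {N R P W : Matrix n n 𝕜} (m : 𝕜)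
    (hK : IsUnit (m • N + R)) (hNP : N * P = 0) (hNW : N * W = 1 - R * P) :
    m • ((m • N + R)⁻¹ - P) = W - P * R * W - ((m • N + R)⁻¹ - P) * (R * W) := by
  set B := (m • N + R)⁻¹
  have hBK : B * (m • N + R) = 1 := nonsing_inv_mul _ ((isUnit_iff_isUnit_det _).mp hK)
  have hKP : (m • N + R) * P = R * P := by rw [add_mul, smul_mul, hNP, smul_zero, zero_add]
  have hBRP : B * (R * P) = P := by rw [← hKP, ← mul_assoc, hBK, one_mul]
  have hBN : m • (B * N) = 1 - B * R := by
    rw [← mul_smul_comm, ← hBK, ← mul_sub, add_sub_cancel_right]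
  calc m • (B - P) = m • (B * (N * W)) := by rw [hNW, mul_sub, mul_one, hBRP]
    _ = (1 - B * R) * W := by rw [← mul_assoc, ← smul_mul_assoc, hBN]
    _ = W - P * R * W - (B - P) * (R * W) := by noncomm_ring

end Matrix

theorem norm_le_of_smul_eq_sub_mul {E : Type*} [SeminormedRing E] [NormedSpace ℝ E]
    {D X Y : E} {m : ℝ} (hm : 0 < m) (hY : 2 * ‖Y‖ ≤ m) (h : m • D = X - D * Y) :
    ‖D‖ ≤ 2 * ‖X‖ / m := by
  have hmD : m * ‖D‖ ≤ ‖X‖ + ‖D‖ * ‖Y‖ := by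
    calc m * ‖D‖ = ‖X - D * Y‖ := by rw [← h, norm_smul, Real.norm_of_nonneg hm.le]
      _ ≤ ‖X‖ + ‖D‖ * ‖Y‖ := (norm_sub_le _ _).trans (by gcongr; exact norm_mul_le _ _)
  rw [le_div_iff₀ hm]
  nlinarith [norm_nonneg D]

theorem stmt0_general (n : ℕ) (N R : Matrix (Fin n) (Fin n) ℝ)
    (e : Matrix (Fin n) (Fin 3) ℝ)
    (hN : N.PosSemidef)
    (hker : ∀ x : Fin n → ℝ, N.mulVec x = 0 ↔ ∃ c : Fin 3 → ℝ, x = e.mulVec c)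
    (K : ℝ → Matrix (Fin n) (Fin n) ℝ)
    (hK : ∀ m : ℝ, K m = m • N + R)
    (m₁ : ℝ) (hKpd : ∀ m ≥ m₁, (K m).PosDef)
    (η : Matrix (Fin 3) (Fin 3) ℝ) (hη : η = eᵀ * R * e) (hηinv : IsUnit η.det) :
    ∃ C > 0, ∃ m₀ > 0, ∀ m ≥ m₀,
      ‖(K m)⁻¹ - e * η⁻¹ * eᵀ‖ ≤ C / m := by
  set P := e * η⁻¹ * eᵀ
  have hNe : N * e = 0 := ext_of_mulVec_single fun j => by
    rw [zero_mulVec, ← mulVec_mulVec]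
    exact (hker _).mpr ⟨_, rfl⟩
  have hNP : N * P = 0 := by simp only [P, ← Matrix.mul_assoc, hNe, Matrix.zero_mul]
  have heRP : eᵀ * (1 - R * P) = 0 := by
    rw [Matrix.mul_sub, Matrix.mul_one, sub_eq_zero]
    simp only [P, ← Matrix.mul_assoc]
    rw [← hη, mul_nonsing_inv η hηinv, Matrix.one_mul]
  obtain ⟨W, hNW⟩ :=
    hN.isHermitian.exists_mul_eq_of_transpose_mul_eq_zero (fun x => (hker x).mp) heRP
  refine ⟨2 * ‖W - P * R * W‖ + 1, by positivity, max (max m₁ 1) (2 * ‖R * W‖),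
    by positivity, fun m hm => ?_⟩
  obtain ⟨⟨hm₁, hm_one⟩, hm_RW⟩ := max_le_iff.mp hm |>.imp_left max_le_iff.mp
  have hKunit : IsUnit (m • N + R) := hK m ▸ (hKpd m hm₁).isUnit
  calc ‖(K m)⁻¹ - P‖ ≤ 2 * ‖W - P * R * W‖ / m :=
        hK m ▸ norm_le_of_smul_eq_sub_mul (one_pos.trans_le hm_one) hm_RW
          (smul_inv_smul_add_sub m hKunit hNP hNW)
    _ ≤ (2 * ‖W - P * R * W‖ + 1) / m := by gcongr; linarith

/-- If `N` is symmetric PSD with 3-dimensional kernel spanned by the orthonormal columns of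
`e`, `R` symmetric, `K m = m • N + R` positive definite for large `m`, and `η = eᵀ R e`
invertible, then `(K m)⁻¹ = e η⁻¹ eᵀ + O(m⁻¹)`. -/
theorem stmt0 (n : ℕ) (N R : Matrix (Fin n) (Fin n) ℝ)
    (e : Matrix (Fin n) (Fin 3) ℝ)
    (hN : N.PosSemidef)
    (he : eᵀ * e = 1)
    (hker : ∀ x : Fin n → ℝ, N.mulVec x = 0 ↔ ∃ c : Fin 3 → ℝ, x = e.mulVec c)
    (hR : R.IsSymm)
    (K : ℝ → Matrix (Fin n) (Fin n) ℝ)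
    (hK : ∀ m : ℝ, K m = m • N + R)
    (m₁ : ℝ) (hKpd : ∀ m ≥ m₁, (K m).PosDef)
    (η : Matrix (Fin 3) (Fin 3) ℝ) (hη : η = eᵀ * R * e) (hηinv : IsUnit η.det) :
    ∃ C > 0, ∃ m₀ > 0, ∀ m ≥ m₀,
      ‖(K m)⁻¹ - e * η⁻¹ * eᵀ‖ ≤ C / m :=
  stmt0_general n N R e hN hker K hK m₁ hKpd η hη hηinv
end

section
/- Consider the block linear system [K_HH(m), K_HL; K_LH, K_LL][x_H; x_L] = [b_H; b_L] with K_HH(m)^{-1} = e η^{-1} e^t + O(m^{-1}), S(m) := K_LL − K_LH K_HH(m)^{-1} K_HL, and S(m) → S_∞ invertible. Then the solution satisfies x_H(m) = e·c_H + O(m^{-1}) where c_H := η^{-1} e^t (b_H − K_HL x_L^∞) and x_L^∞ := S_∞^{-1}(b_L − K_LH e η^{-1} e^t b_H); i.e., x_H(m) converges to a vector in the column span of e. -/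
open Matrix

attribute [local instance] Matrix.linftyOpNormedAddCommGroup Matrix.linftyOpNormedRing

/-!
Eliminating `x_H = K_HH(m)⁻¹ (b_H - K_HL x_L)` leaves the Schur complement system
`S(m) x_L = b_L - K_LH K_HH(m)⁻¹ b_H`, whose matrix and right-hand side are `O(m⁻¹)`-perturbations
of those of the limit system `S∞ x_L^∞ = b_L - K_LH e η⁻¹ eᵀ b_H`. Once
`‖S∞⁻¹‖ ‖S(m) - S∞‖ ≤ 1/2`, the error `x_L - x_L^∞` can be absorbed into the left-hand side, so
it is `O(m⁻¹)` as well; substituting back gives the estimate for `x_H`.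
-/

open Filter Asymptotics Topology

section

variable {𝕜 : Type*} [NormedField 𝕜] {ι κ ν : Type*} [Fintype ι] [Fintype κ] [Fintype ν]
  {α : Type*} {L : Filter α} {g g₁ g₂ : α → ℝ}

theorem Asymptotics.IsBigO.matrix_mul {F : α → Matrix ι κ 𝕜} {G : α → Matrix κ ν 𝕜}
    (hF : F =O[L] g₁) (hG : G =O[L] g₂) : (fun a => F a * G a) =O[L] fun a => g₁ a * g₂ a :=
  (IsBigO.of_norm_le fun a => linfty_opNorm_mul (F a) (G a)).trans
    (hF.norm_left.mul hG.norm_left)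

theorem Asymptotics.IsBigO.mulVec {F : α → Matrix ι κ 𝕜} {v : α → κ → 𝕜}
    (hF : F =O[L] g₁) (hv : v =O[L] g₂) : (fun a => F a *ᵥ v a) =O[L] fun a => g₁ a * g₂ a :=
  (IsBigO.of_norm_le fun a => linfty_opNorm_mulVec (F a) (v a)).trans
    (hF.norm_left.mul hv.norm_left)

namespace Matrix

theorem eq_inv_mulVec_of_mulVec_add_eq [DecidableEq ι] {K : Matrix ι ι 𝕜} (hK : IsUnit K.det)
    {B : Matrix ι κ 𝕜} {x b : ι → 𝕜} {y : κ → 𝕜} (h : K *ᵥ x + B *ᵥ y = b) :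
    x = K⁻¹ *ᵥ (b - B *ᵥ y) := by
  rw [← h, add_sub_cancel_right, mulVec_mulVec, nonsing_inv_mul _ hK, one_mulVec]

theorem schur_complement_mulVec_eq {A : Matrix ι ι 𝕜} {B : Matrix ι κ 𝕜} {B' : Matrix κ ι 𝕜}
    {D : Matrix κ κ 𝕜} {x b : ι → 𝕜} {y c : κ → 𝕜} (hx : x = A *ᵥ (b - B *ᵥ y))
    (h : B' *ᵥ x + D *ᵥ y = c) : (D - B' * A * B) *ᵥ y = c - B' *ᵥ (A *ᵥ b) := by
  rw [← h, hx]
  simp only [sub_mulVec, mulVec_sub, mulVec_mulVec, Matrix.mul_assoc]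
  abel

theorem norm_sub_le_of_mulVec_eq [DecidableEq κ] {S S₀ : Matrix κ κ 𝕜} (h₀ : IsUnit S₀.det)
    {y y₀ r r₀ : κ → 𝕜} (hy : S *ᵥ y = r) (hy₀ : S₀ *ᵥ y₀ = r₀)
    (hsmall : ‖S₀⁻¹‖ * ‖S - S₀‖ ≤ 1 / 2) :
    ‖y - y₀‖ ≤ 2 * ‖S₀⁻¹‖ * (‖S - S₀‖ * ‖y₀‖ + ‖r - r₀‖) := by
  have hS₀ : S₀ *ᵥ (y - y₀) = (r - r₀) - (S - S₀) *ᵥ (y - y₀) - (S - S₀) *ᵥ y₀ := by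
    rw [← hy, ← hy₀]
    simp only [sub_mulVec, mulVec_sub]
    abel
  have hid : y - y₀ = S₀⁻¹ *ᵥ (S₀ *ᵥ (y - y₀)) := by
    rw [mulVec_mulVec, nonsing_inv_mul _ h₀, one_mulVec]
  have hbound : ‖y - y₀‖ ≤
      ‖S₀⁻¹‖ * (‖r - r₀‖ + ‖S - S₀‖ * ‖y - y₀‖ + ‖S - S₀‖ * ‖y₀‖) := by
    calc ‖y - y₀‖ = ‖S₀⁻¹ *ᵥ (S₀ *ᵥ (y - y₀))‖ := by rw [← hid]
      _ ≤ ‖S₀⁻¹‖ * ‖S₀ *ᵥ (y - y₀)‖ := linfty_opNorm_mulVec _ _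
      _ ≤ _ := by
        gcongr
        rw [hS₀]
        refine (norm_sub_le _ _).trans (add_le_add ((norm_sub_le _ _).trans ?_) ?_)
        · exact add_le_add le_rfl (linfty_opNorm_mulVec _ _)
        · exact linfty_opNorm_mulVec _ _
  have habsorb : ‖S₀⁻¹‖ * (‖S - S₀‖ * ‖y - y₀‖) ≤ 1 / 2 * ‖y - y₀‖ := by
    rw [← mul_assoc]
    exact mul_le_mul_of_nonneg_right hsmall (norm_nonneg _)
  nlinarith

theorem isBigO_sub_inv_mulVec_of_mulVec_eq [DecidableEq κ] {S : α → Matrix κ κ 𝕜}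
    {S₀ : Matrix κ κ 𝕜} (h₀ : IsUnit S₀.det) {r : α → κ → 𝕜} {r₀ : κ → 𝕜} {y : α → κ → 𝕜}
    (hS : (fun a => S a - S₀) =O[L] g) (hr : (fun a => r a - r₀) =O[L] g)
    (hg : Tendsto g L (𝓝 0)) (hy : ∀ᶠ a in L, S a *ᵥ y a = r a) :
    (fun a => y a - S₀⁻¹ *ᵥ r₀) =O[L] g := by
  have hy₀ : S₀ *ᵥ (S₀⁻¹ *ᵥ r₀) = r₀ := by rw [mulVec_mulVec, mul_nonsing_inv _ h₀, one_mulVec]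
  have hsmall : ∀ᶠ a in L, ‖S₀⁻¹‖ * ‖S a - S₀‖ ≤ 1 / 2 := by
    have hlim := (hS.trans_tendsto hg).norm.const_mul ‖S₀⁻¹‖
    rw [norm_zero, mul_zero] at hlim
    exact (hlim.eventually_lt_const one_half_pos).mono fun _ => le_of_lt
  have hbound : (fun a => 2 * ‖S₀⁻¹‖ * (‖S a - S₀‖ * ‖S₀⁻¹ *ᵥ r₀‖ + ‖r a - r₀‖)) =O[L] g :=
    (((hS.norm_left.const_mul_left ‖S₀⁻¹ *ᵥ r₀‖).add hr.norm_left).const_mul_left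
      (2 * ‖S₀⁻¹‖)).congr_left fun a => by ring
  refine (IsBigO.of_norm_eventuallyLE ?_).trans hbound
  filter_upwards [hy, hsmall] with a hya hsa
  exact norm_sub_le_of_mulVec_eq h₀ hya hy₀ hsa

theorem isBigO_sub_of_block_mulVec_eq [DecidableEq ι] [DecidableEq κ] {K : α → Matrix ι ι 𝕜}
    {P : Matrix ι ι 𝕜} {B : Matrix ι κ 𝕜} {B' : Matrix κ ι 𝕜} {D : Matrix κ κ 𝕜}
    (hK : ∀ᶠ a in L, IsUnit (K a).det) (hKP : (fun a => (K a)⁻¹ - P) =O[L] g)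
    (hg : Tendsto g L (𝓝 0)) (hS₀ : IsUnit (D - B' * P * B).det) {b : ι → 𝕜} {c : κ → 𝕜}
    {x : α → ι → 𝕜} {y : α → κ → 𝕜}
    (hsol : ∀ᶠ a in L, K a *ᵥ x a + B *ᵥ y a = b ∧ B' *ᵥ x a + D *ᵥ y a = c) :
    (fun a => x a - P *ᵥ (b - B *ᵥ ((D - B' * P * B)⁻¹ *ᵥ (c - B' *ᵥ (P *ᵥ b))))) =O[L] g := by
  set y₀ := (D - B' * P * B)⁻¹ *ᵥ (c - B' *ᵥ (P *ᵥ b))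
  have hx : ∀ᶠ a in L, x a = (K a)⁻¹ *ᵥ (b - B *ᵥ y a) :=
    (hK.and hsol).mono fun a h => eq_inv_mulVec_of_mulVec_add_eq h.1 h.2.1
  have hPK : (fun a => P - (K a)⁻¹) =O[L] g := hKP.neg_left.congr_left fun a => neg_sub _ _
  have hy : (fun a => y a - y₀) =O[L] g := by
    refine isBigO_sub_inv_mulVec_of_mulVec_eq hS₀ ?_ ?_ hg
      ((hx.and hsol).mono fun a h => schur_complement_mulVec_eq h.1 h.2.2)
    · simpa [Matrix.mul_sub, Matrix.sub_mul] using
        ((isBigO_const_one ℝ B' L).matrix_mul hPK).matrix_mul (isBigO_const_one ℝ B L)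
    · simpa [Matrix.mulVec_sub, Matrix.sub_mulVec] using
        (isBigO_const_one ℝ B' L).mulVec (hPK.mulVec (isBigO_const_one ℝ b L))
  have hBy : (fun a => b - B *ᵥ y a) =O[L] fun _ => (1 : ℝ) := by
    have hyt : Tendsto y L (𝓝 y₀) := tendsto_sub_nhds_zero_iff.mp (hy.trans_tendsto hg)
    exact (tendsto_const_nhds.sub ((continuous_const.matrix_mulVec continuous_id).tendsto _
      |>.comp hyt)).isBigO_one ℝ
  have hsplit : ∀ᶠ a in L, x a - P *ᵥ (b - B *ᵥ y₀) =
      ((K a)⁻¹ - P) *ᵥ (b - B *ᵥ y a) - P *ᵥ (B *ᵥ (y a - y₀)) := by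
    filter_upwards [hx] with a hxa
    rw [hxa]
    simp only [sub_mulVec, mulVec_sub]
    abel
  have hKPBy : (fun a => ((K a)⁻¹ - P) *ᵥ (b - B *ᵥ y a)) =O[L] g := by
    simpa only [mul_one] using hKP.mulVec hBy
  have hPBy : (fun a => P *ᵥ (B *ᵥ (y a - y₀))) =O[L] g := by
    simpa only [one_mul] using
      (isBigO_const_one ℝ P L).mulVec ((isBigO_const_one ℝ B L).mulVec hy)
  exact (hKPBy.sub hPBy).congr' (hsplit.mono fun _ h => h.symm) EventuallyEq.rfl

end Matrix

end

theorem Asymptotics.isBigO_inv_atTop_of_norm_le_div {E : Type*} [SeminormedAddCommGroup E]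
    {f : ℝ → E} {C m₁ : ℝ} (h : ∀ m ≥ m₁, ‖f m‖ ≤ C / m) : f =O[atTop] fun m => m⁻¹ := by
  refine IsBigO.of_bound C ((eventually_ge_atTop (max m₁ 1)).mono fun m hm => ?_)
  have hm₀ : 0 < m := one_pos.trans_le (le_of_max_le_right hm)
  rw [norm_inv, Real.norm_of_nonneg hm₀.le, ← div_eq_mul_inv]
  exact h m (le_of_max_le_left hm)

theorem Asymptotics.IsBigO.exists_pos_norm_le_div {E : Type*} [SeminormedAddCommGroup E]
    {f : ℝ → E} (h : f =O[atTop] fun m => m⁻¹) : ∃ C > 0, ∃ m₀ > 0, ∀ m ≥ m₀, ‖f m‖ ≤ C / m := by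
  obtain ⟨C, hC, hCf⟩ := h.exists_pos
  obtain ⟨N, hN⟩ := eventually_atTop.mp hCf.bound
  refine ⟨C, hC, max N 1, by positivity, fun m hm => ?_⟩
  have hm₀ : 0 < m := one_pos.trans_le (le_of_max_le_right hm)
  simpa [abs_of_pos hm₀, div_eq_mul_inv] using hN m (le_of_max_le_left hm)

theorem stmt4_general (nH nL : ℕ)
    (KHH : ℝ → Matrix (Fin nH) (Fin nH) ℝ)
    (KHL : Matrix (Fin nH) (Fin nL) ℝ) (KLH : Matrix (Fin nL) (Fin nH) ℝ)
    (KLL : Matrix (Fin nL) (Fin nL) ℝ)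
    (e : Matrix (Fin nH) (Fin 3) ℝ) (η : Matrix (Fin 3) (Fin 3) ℝ)
    (C₁ m₁ : ℝ)
    (hKHHinv : ∀ m ≥ m₁, IsUnit (KHH m).det ∧ ‖(KHH m)⁻¹ - e * η⁻¹ * eᵀ‖ ≤ C₁ / m)
    (Sinf : Matrix (Fin nL) (Fin nL) ℝ)
    (hSinf : Sinf = KLL - (KLH * e) * η⁻¹ * (eᵀ * KHL))
    (hSinfinv : IsUnit Sinf.det)
    (bH : Fin nH → ℝ) (bL : Fin nL → ℝ)
    (xH : ℝ → Fin nH → ℝ) (xL : ℝ → Fin nL → ℝ)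
    (hsol : ∀ m ≥ m₁,
      (KHH m).mulVec (xH m) + KHL.mulVec (xL m) = bH ∧
      KLH.mulVec (xH m) + KLL.mulVec (xL m) = bL) :
    ∃ C > 0, ∃ m₀ > 0, ∀ m ≥ m₀,
      ‖xH m - e.mulVec ((η⁻¹).mulVec (eᵀ.mulVec
          (bH - KHL.mulVec (Sinf⁻¹.mulVec
            (bL - KLH.mulVec ((e * η⁻¹ * eᵀ).mulVec bH))))))‖ ≤ C / m := by
  have hSinf' : Sinf = KLL - KLH * (e * η⁻¹ * eᵀ) * KHL := by
    simp only [hSinf, Matrix.mul_assoc]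
  have hxH := Matrix.isBigO_sub_of_block_mulVec_eq
    ((eventually_ge_atTop m₁).mono fun m hm => (hKHHinv m hm).1)
    (isBigO_inv_atTop_of_norm_le_div fun m hm => (hKHHinv m hm).2) tendsto_inv_atTop_zero
    (hSinf' ▸ hSinfinv) ((eventually_ge_atTop m₁).mono hsol)
  rw [← hSinf'] at hxH
  simpa only [mulVec_mulVec, Matrix.mul_assoc] using hxH.exists_pos_norm_le_div

/-- For the block system `[K_HH(m), K_HL; K_LH, K_LL][x_H; x_L] = [b_H; b_L]` with
`K_HH(m)⁻¹ = e η⁻¹ eᵀ + O(m⁻¹)` and the Schur complements `S(m)` invertible with invertible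
limit `S∞`, the solution satisfies `x_H(m) = e c_H + O(m⁻¹)` where
`c_H = η⁻¹ eᵀ (b_H - K_HL x_L^∞)` and `x_L^∞ = S∞⁻¹ (b_L - K_LH e η⁻¹ eᵀ b_H)`;
i.e. `x_H(m)` converges to a vector in the column span of `e`. -/
theorem stmt4 (nH nL : ℕ)
    (KHH : ℝ → Matrix (Fin nH) (Fin nH) ℝ)
    (KHL : Matrix (Fin nH) (Fin nL) ℝ) (KLH : Matrix (Fin nL) (Fin nH) ℝ)
    (KLL : Matrix (Fin nL) (Fin nL) ℝ)
    (hsym : KHLᵀ = KLH)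
    (e : Matrix (Fin nH) (Fin 3) ℝ) (η : Matrix (Fin 3) (Fin 3) ℝ)
    (hηinv : IsUnit η.det)
    (C₁ m₁ : ℝ)
    (hKHHinv : ∀ m ≥ m₁, IsUnit (KHH m).det ∧ ‖(KHH m)⁻¹ - e * η⁻¹ * eᵀ‖ ≤ C₁ / m)
    (S : ℝ → Matrix (Fin nL) (Fin nL) ℝ)
    (hS : ∀ m, S m = KLL - KLH * (KHH m)⁻¹ * KHL)
    (hSinv : ∀ m ≥ m₁, IsUnit (S m).det)
    (Sinf : Matrix (Fin nL) (Fin nL) ℝ)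
    (hSinf : Sinf = KLL - (KLH * e) * η⁻¹ * (eᵀ * KHL))
    (hSinfinv : IsUnit Sinf.det)
    (bH : Fin nH → ℝ) (bL : Fin nL → ℝ)
    (xH : ℝ → Fin nH → ℝ) (xL : ℝ → Fin nL → ℝ)
    (hsol : ∀ m ≥ m₁,
      (KHH m).mulVec (xH m) + KHL.mulVec (xL m) = bH ∧
      KLH.mulVec (xH m) + KLL.mulVec (xL m) = bL) :
    ∃ C > 0, ∃ m₀ > 0, ∀ m ≥ m₀,
      ‖xH m - e.mulVec ((η⁻¹).mulVec (eᵀ.mulVec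
          (bH - KHL.mulVec (Sinf⁻¹.mulVec
            (bL - KLH.mulVec ((e * η⁻¹ * eᵀ).mulVec bH))))))‖ ≤ C / m :=
  stmt4_general nH nL KHH KHL KLH KLL e η C₁ m₁ hKHHinv Sinf hSinf hSinfinv bH bL xH xL hsol
end

section
/- Let K(m) be a family of symmetric positive definite n×n matrices with K(m) = m·N + R where N is symmetric positive semidefinite with 3-dimensional kernel range(e) (e having orthonormal columns) and R symmetric with η := e^t R e positive definite. Then the principal (inverse) square root satisfies K(m)^{-1/2} = e·η^{-1/2}·e^t + O(m^{-1/2}) as m → ∞. -/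
open Matrix

attribute [local instance] Matrix.linftyOpNormedAddCommGroup Matrix.linftyOpNormedRing

open scoped ComplexOrder in
/-- The square root of a positive semidefinite matrix, as defined in the older Mathlib
(`Matrix.PosSemidef.sqrt`, since removed). -/
noncomputable def Matrix.PosSemidef.sqrt {n 𝕜 : Type*} [Fintype n] [RCLike 𝕜] [DecidableEq n]
    {A : Matrix n n 𝕜} (hA : A.PosSemidef) : Matrix n n 𝕜 :=
  hA.1.eigenvectorUnitary.1 * diagonal ((↑) ∘ (√·) ∘ hA.1.eigenvalues) *
    (star hA.1.eigenvectorUnitary : Matrix n n 𝕜)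

/-!
Put `S = K(m)^{-1/2}` and `T = e η^{-1/2} eᵀ`; both are positive semidefinite, `S² = K⁻¹` and
`T² = e η⁻¹ eᵀ`. Since `K e = R e`, the Schur-complement identity gives
`K⁻¹ - e η⁻¹ eᵀ = Mᵀ K⁻¹ M` with `M = 1 - R e η⁻¹ eᵀ`, and `eᵀ M = 0`. On the orthogonal
complement of `range e` the form of `K(m) = m N + R` grows like `m` (`N` is coercive there and `R`
is bounded), so `0 ≤ S² - T² ≤ (C / m) • 1`. If `(S - T) v = λ v`, then
`⟪v, (S² - T²) v⟫ = λ (⟪v, S v⟫ + ⟪v, T v⟫)` while `λ ‖v‖² = ⟪v, S v⟫ - ⟪v, T v⟫`, which forces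
`λ² ≤ C / m`. Hence every eigenvalue, so every entry and the norm of `S - T`, is `O(m^{-1/2})`.
-/

open scoped MatrixOrder ComplexOrder

theorem Matrix.IsHermitian.isSymm {k α : Type*} [Star α] [TrivialStar α] {A : Matrix k k α}
    (hA : A.IsHermitian) : A.IsSymm := by
  rwa [IsHermitian, conjTranspose_eq_transpose_of_trivial] at hA

variable {k l : Type*} [Fintype k] [Fintype l]

theorem dotProduct_self_nonneg {R : Type*} [Ring R] [LinearOrder R] [IsStrictOrderedRing R]
    (v : k → R) : 0 ≤ v ⬝ᵥ v :=
  Finset.sum_nonneg fun i _ => mul_self_nonneg (v i)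

theorem neg_le_two_mul_dotProduct (x y : k → ℝ) {t : ℝ} (ht : 0 < t) :
    -(t * (x ⬝ᵥ x) + (y ⬝ᵥ y) / t) ≤ 2 * (x ⬝ᵥ y) := by
  have h := dotProduct_self_nonneg (t • x + y)
  simp only [add_dotProduct, dotProduct_add, smul_dotProduct, dotProduct_smul, smul_eq_mul,
    dotProduct_comm y x] at h
  rw [neg_le_iff_add_nonneg', ← mul_nonneg_iff_of_pos_left ht]
  refine h.trans_eq ?_
  rw [mul_add t (_ + _), mul_add t _ (_ / t), mul_div_cancel₀ _ ht.ne']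
  ring

namespace Matrix

theorem PosSemidef.sqrt_eq_cfcSqrt [DecidableEq k] {𝕜 : Type*} [RCLike 𝕜] {A : Matrix k k 𝕜}
    (hA : A.PosSemidef) : hA.sqrt = CFC.sqrt A := by
  rw [CFC.sqrt_eq_cfc, cfc_nnreal_eq_real _ A, hA.1.cfc_eq]
  simp only [IsHermitian.cfc, PosSemidef.sqrt, Unitary.conjStarAlgAut_apply]
  congr 3
  ext i
  simp [Real.coe_toNNReal', max_eq_left (hA.eigenvalues_nonneg i)]

theorem PosDef.inv_sqrt [DecidableEq k] {A : Matrix k k ℝ} (hA : A.PosDef) :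
    (hA.posSemidef.sqrt)⁻¹ = CFC.sqrt A⁻¹ := by
  rw [hA.posSemidef.sqrt_eq_cfcSqrt, hA.posSemidef.inv_sqrt]

theorem IsSymm.dotProduct_mulVec_comm {α : Type*} [CommSemiring α] {A : Matrix k k α}
    (hA : A.IsSymm) (x y : k → α) : x ⬝ᵥ A *ᵥ y = y ⬝ᵥ A *ᵥ x := by
  rw [dotProduct_mulVec, ← mulVec_transpose, hA.eq, dotProduct_comm]

theorem dotProduct_transpose_mul_mul_mulVec {α : Type*} [CommSemiring α] (A : Matrix k k α)
    (B : Matrix k l α) (x : l → α) : x ⬝ᵥ (Bᵀ * A * B) *ᵥ x = B *ᵥ x ⬝ᵥ A *ᵥ (B *ᵥ x) := by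
  rw [Matrix.mul_assoc, ← mulVec_mulVec, dotProduct_mulVec, vecMul_transpose, ← mulVec_mulVec]

theorem dotProduct_mulVec_mul_transpose_self (e : Matrix k l ℝ) (x : k → ℝ) :
    x ⬝ᵥ (e * eᵀ) *ᵥ x = eᵀ *ᵥ x ⬝ᵥ eᵀ *ᵥ x := by
  rw [← mulVec_mulVec, dotProduct_mulVec, ← mulVec_transpose]

theorem dotProduct_mulVec_le_of_le_algebraMap [DecidableEq k] {A : Matrix k k ℝ} {c : ℝ}
    (h : A ≤ algebraMap ℝ _ c) (x : k → ℝ) : x ⬝ᵥ A *ᵥ x ≤ c * (x ⬝ᵥ x) := by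
  have := (le_iff.mp h).dotProduct_mulVec_nonneg x
  simp only [star_trivial, Algebra.algebraMap_eq_smul_one, sub_mulVec, smul_mulVec, one_mulVec,
    dotProduct_sub, dotProduct_smul, smul_eq_mul] at this
  linarith

theorem le_dotProduct_mulVec_of_algebraMap_le [DecidableEq k] {A : Matrix k k ℝ} {c : ℝ}
    (h : algebraMap ℝ _ c ≤ A) (x : k → ℝ) : c * (x ⬝ᵥ x) ≤ x ⬝ᵥ A *ᵥ x := by
  have := (le_iff.mp h).dotProduct_mulVec_nonneg x
  simp only [star_trivial, Algebra.algebraMap_eq_smul_one, sub_mulVec, smul_mulVec, one_mulVec,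
    dotProduct_sub, dotProduct_smul, smul_eq_mul] at this
  linarith

theorem PosDef.exists_pos_mul_dotProduct_le [DecidableEq k] {A : Matrix k k ℝ} (hA : A.PosDef) :
    ∃ c > 0, ∀ x, c * (x ⬝ᵥ x) ≤ x ⬝ᵥ A *ᵥ x := by
  obtain hk | hk := isEmpty_or_nonempty k
  · exact ⟨1, one_pos, fun x => by simp [dotProduct]⟩
  obtain ⟨i₀, hi₀⟩ := Finite.exists_min hA.1.eigenvalues
  refine ⟨_, hA.eigenvalues_pos i₀, le_dotProduct_mulVec_of_algebraMap_le ?_⟩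
  refine algebraMap_le_of_le_spectrum (fun x hx => ?_) hA.1
  obtain ⟨i, rfl⟩ := hA.1.spectrum_real_eq_range_eigenvalues ▸ hx
  exact hi₀ i

theorem exists_dotProduct_mulVec_self_le (B : Matrix k l ℝ) :
    ∃ c ≥ 0, ∀ x, B *ᵥ x ⬝ᵥ B *ᵥ x ≤ c * (x ⬝ᵥ x) := by
  classical
  have hB : (Bᵀ * B).PosSemidef := by simpa using posSemidef_conjTranspose_mul_self B
  refine ⟨∑ i, hB.1.eigenvalues i, Finset.sum_nonneg fun i _ => hB.eigenvalues_nonneg i,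
    fun x => ?_⟩
  rw [show B *ᵥ x ⬝ᵥ B *ᵥ x = x ⬝ᵥ (Bᵀ * B) *ᵥ x by
    simpa using (dotProduct_transpose_mul_mul_mulVec 1 B x).symm]
  refine dotProduct_mulVec_le_of_le_algebraMap
    (le_algebraMap_of_spectrum_le (fun x hx => ?_) hB.1) x
  obtain ⟨i, rfl⟩ := hB.1.spectrum_real_eq_range_eigenvalues ▸ hx
  exact Finset.single_le_sum (fun j _ => hB.eigenvalues_nonneg j) (Finset.mem_univ i)

theorem sq_le_of_mulVec_sub_eq_smul {S T : Matrix k k ℝ} (hS : S.PosSemidef)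
    (hT : T.PosSemidef) {β : ℝ} (h₀ : ∀ v, 0 ≤ v ⬝ᵥ (S * S - T * T) *ᵥ v)
    (hβ : ∀ v, v ⬝ᵥ (S * S - T * T) *ᵥ v ≤ β * (v ⬝ᵥ v))
    {v : k → ℝ} (hv : v ≠ 0) {μ : ℝ} (hSTv : (S - T) *ᵥ v = μ • v) : μ ^ 2 ≤ β := by
  have hvv : 0 < v ⬝ᵥ v := by simpa using dotProduct_star_self_pos_iff.mpr hv
  have hSv : 0 ≤ v ⬝ᵥ S *ᵥ v := by simpa using hS.dotProduct_mulVec_nonneg v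
  have hTv : 0 ≤ v ⬝ᵥ T *ᵥ v := by simpa using hT.dotProduct_mulVec_nonneg v
  have hdiff : v ⬝ᵥ (S * S - T * T) *ᵥ v = μ * (v ⬝ᵥ S *ᵥ v + v ⬝ᵥ T *ᵥ v) := by
    have hsplit : S * S - T * T = S * (S - T) + (S - T) * T := by noncomm_ring
    rw [hsplit, add_mulVec, dotProduct_add, ← mulVec_mulVec, ← mulVec_mulVec, hSTv,
      (hS.1.sub hT.1).isSymm.dotProduct_mulVec_comm, hSTv]
    simp only [mulVec_smul, dotProduct_smul, smul_dotProduct, smul_eq_mul,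
      dotProduct_comm (T *ᵥ v)]
    ring
  have hμ : μ * (v ⬝ᵥ v) = v ⬝ᵥ S *ᵥ v - v ⬝ᵥ T *ᵥ v := by
    rw [← dotProduct_sub, ← sub_mulVec, hSTv, dotProduct_smul, smul_eq_mul]
  have h0 := h₀ v
  have h1 := hβ v
  rw [hdiff] at h0 h1
  -- with `a = ⟪v, S v⟫`, `b = ⟪v, T v⟫`: for `μ ≥ 0`, `μ² ‖v‖² = μ (a - b) ≤ μ (a + b) ≤ β ‖v‖²`,
  -- while `μ < 0` would force `a + b = 0`, hence `a = b = 0` and `μ = 0`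
  rcases le_or_gt 0 μ with hμ0 | hμ0 <;> nlinarith

theorem IsHermitian.abs_apply_le [DecidableEq k] {A : Matrix k k ℝ} (hA : A.IsHermitian)
    {c : ℝ} (h : ∀ j, |hA.eigenvalues j| ≤ c) (i j : k) : |A i j| ≤ Fintype.card k * c := by
  set U : Matrix k k ℝ := (hA.eigenvectorUnitary : Matrix k k ℝ)
  have hU : ∀ i j, |U i j| ≤ 1 := entry_norm_bound_of_unitary hA.eigenvectorUnitary.2
  have hentry : A i j = ∑ x, U i x * hA.eigenvalues x * U j x := by
    conv_lhs => rw [hA.spectral_theorem, Unitary.conjStarAlgAut_apply]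
    rw [mul_apply]
    simp [mul_diagonal, U]
  have hterm : ∀ x, |U i x * hA.eigenvalues x * U j x| ≤ c := fun x => by
    rw [abs_mul, abs_mul]
    calc |U i x| * |hA.eigenvalues x| * |U j x| ≤ 1 * c * 1 :=
          mul_le_mul (mul_le_mul (hU i x) (h x) (abs_nonneg _) zero_le_one) (hU j x)
            (abs_nonneg _) (by linarith [(abs_nonneg _).trans (h x)])
      _ = c := by ring
  rw [hentry]
  calc |∑ x, U i x * hA.eigenvalues x * U j x| ≤ ∑ x, |U i x * hA.eigenvalues x * U j x| :=
        Finset.abs_sum_le_sum_abs _ _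
    _ ≤ Fintype.card k * c :=
        (Finset.sum_le_card_nsmul _ _ _ fun x _ => hterm x).trans_eq (by simp)

theorem linfty_opNorm_le_of_abs_apply_le {A : Matrix k l ℝ} {c : ℝ} (hc : 0 ≤ c)
    (h : ∀ i j, |A i j| ≤ c) : ‖A‖ ≤ Fintype.card l * c := by
  rw [linfty_opNorm_def, ← Real.toNNReal_le_toNNReal_iff (by positivity), Real.toNNReal_coe]
  refine Finset.sup_le fun i _ => ?_
  rw [← NNReal.coe_le_coe, NNReal.coe_sum, Real.coe_toNNReal _ (by positivity)]
  exact (Finset.sum_le_card_nsmul _ _ _ fun j _ => h i j).trans_eq (by simp)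

theorem PosSemidef.norm_sub_le_of_sq_sub_sq [DecidableEq k] {S T : Matrix k k ℝ}
    (hS : S.PosSemidef) (hT : T.PosSemidef) {β : ℝ}
    (h₀ : ∀ v, 0 ≤ v ⬝ᵥ (S * S - T * T) *ᵥ v)
    (hβ : ∀ v, v ⬝ᵥ (S * S - T * T) *ᵥ v ≤ β * (v ⬝ᵥ v)) :
    ‖S - T‖ ≤ Fintype.card k * (Fintype.card k * √β) := by
  have hST := hS.1.sub hT.1
  have heig : ∀ j, |hST.eigenvalues j| ≤ √β := fun j =>
    Real.abs_le_sqrt <| sq_le_of_mulVec_sub_eq_smul hS hT h₀ hβ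
      (fun h => hST.eigenvectorBasis.orthonormal.ne_zero j
        (by simpa using congrArg (WithLp.toLp 2) h))
      (hST.mulVec_eigenvectorBasis j)
  exact linfty_opNorm_le_of_abs_apply_le (by positivity) (hST.abs_apply_le heig)

theorem inv_sub_eq_transpose_mul_inv_mul {α : Type*} [CommRing α] [DecidableEq k]
    [DecidableEq l] {K : Matrix k k α} (hK : K.IsSymm) (hKdet : IsUnit K.det) (e : Matrix k l α)
    (hG : IsUnit (eᵀ * K * e).det) :
    K⁻¹ - e * (eᵀ * K * e)⁻¹ * eᵀ =
      (1 - K * e * (eᵀ * K * e)⁻¹ * eᵀ)ᵀ * K⁻¹ * (1 - K * e * (eᵀ * K * e)⁻¹ * eᵀ) := by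
  set G := eᵀ * K * e
  set P := e * G⁻¹ * eᵀ
  have hGt : Gᵀ = G := by simp [G, hK.eq, Matrix.mul_assoc]
  have hPt : Pᵀ = P := by simp [P, transpose_nonsing_inv, hGt, Matrix.mul_assoc]
  have hKP : K * e * G⁻¹ * eᵀ = K * P := by simp only [P, Matrix.mul_assoc]
  have hPKP : P * K * P = P := by
    calc P * K * P = e * G⁻¹ * G * G⁻¹ * eᵀ := by simp only [P, G, Matrix.mul_assoc]
      _ = P := by rw [Matrix.mul_assoc e, nonsing_inv_mul G hG, Matrix.mul_one]
  have hPKK : (1 - P * K) * K⁻¹ = K⁻¹ - P := by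
    rw [Matrix.sub_mul, Matrix.one_mul, Matrix.mul_assoc, mul_nonsing_inv K hKdet,
      Matrix.mul_one]
  rw [hKP, transpose_sub, transpose_one, transpose_mul, hPt, hK.eq, hPKK, Matrix.mul_sub,
    Matrix.mul_one, Matrix.sub_mul, ← Matrix.mul_assoc K⁻¹, nonsing_inv_mul K hKdet,
    Matrix.one_mul, ← Matrix.mul_assoc, hPKP]
  abel

theorem transpose_mul_one_sub_eq_zero {α : Type*} [CommRing α] [DecidableEq k] [DecidableEq l]
    (K : Matrix k k α) (e : Matrix k l α) (hG : IsUnit (eᵀ * K * e).det) :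
    eᵀ * (1 - K * e * (eᵀ * K * e)⁻¹ * eᵀ) = 0 := by
  rw [Matrix.mul_sub, Matrix.mul_one, ← Matrix.mul_assoc, ← Matrix.mul_assoc,
    ← Matrix.mul_assoc, mul_nonsing_inv _ hG, Matrix.one_mul, sub_self]

theorem exists_pos_mul_le_dotProduct_mulVec_of_ker [DecidableEq k] {N : Matrix k k ℝ}
    {e : Matrix k l ℝ} (hN : N.PosSemidef) (hker : ∀ x, N *ᵥ x = 0 → ∃ c, x = e *ᵥ c) :
    ∃ μ > 0, ∀ q, eᵀ *ᵥ q = 0 → μ * (q ⬝ᵥ q) ≤ q ⬝ᵥ N *ᵥ q := by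
  have hpd : (N + e * eᵀ).PosDef := by
    refine .of_dotProduct_mulVec_pos
      (hN.1.add (by simpa using isHermitian_mul_conjTranspose_self e)) fun x hx => ?_
    have hNx : 0 ≤ x ⬝ᵥ N *ᵥ x := by simpa using hN.dotProduct_mulVec_nonneg x
    rw [star_trivial, add_mulVec, dotProduct_add, dotProduct_mulVec_mul_transpose_self]
    refine lt_of_le_of_ne (add_nonneg hNx (dotProduct_self_nonneg _)) fun h => hx ?_
    have hex := dotProduct_self_nonneg (eᵀ *ᵥ x)
    have he0 : eᵀ *ᵥ x = 0 := dotProduct_self_eq_zero.mp (by linarith)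
    have hN0 : N *ᵥ x = 0 :=
      (hN.dotProduct_mulVec_zero_iff x).mp (by simpa using (by linarith : x ⬝ᵥ N *ᵥ x = 0))
    -- `x ∈ ker N = range e` is orthogonal to `range e`
    obtain ⟨c, hc⟩ := hker x hN0
    rw [← dotProduct_self_eq_zero]
    nth_rw 2 [hc]
    rw [dotProduct_mulVec, ← mulVec_transpose, he0, zero_dotProduct]
  obtain ⟨μ, hμ, hμN⟩ := hpd.exists_pos_mul_dotProduct_le
  refine ⟨μ, hμ, fun q hq => ?_⟩
  simpa [add_mulVec, dotProduct_add, dotProduct_mulVec_mul_transpose_self, hq] using hμN q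

theorem exists_mul_le_dotProduct_smul_add_mulVec [DecidableEq k] [DecidableEq l]
    {N R : Matrix k k ℝ} {e : Matrix k l ℝ} (hN : N.PosSemidef)
    (hker : ∀ x, N *ᵥ x = 0 ↔ ∃ c, x = e *ᵥ c) (he : eᵀ * e = 1) (hR : R.IsSymm)
    (hη : (eᵀ * R * e).PosDef) :
    ∃ a > 0, ∃ m₀ > 0, ∀ m ≥ m₀, ∀ y,
      a * m * ((y - e *ᵥ (eᵀ *ᵥ y)) ⬝ᵥ (y - e *ᵥ (eᵀ *ᵥ y))) ≤ y ⬝ᵥ (m • N + R) *ᵥ y := by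
  obtain ⟨μ, hμ, hμN⟩ := exists_pos_mul_le_dotProduct_mulVec_of_ker hN fun x => (hker x).mp
  obtain ⟨δ, hδ, hδη⟩ := hη.exists_pos_mul_dotProduct_le
  obtain ⟨ρ, hρ, hρR⟩ := exists_dotProduct_mulVec_self_le R
  -- beyond `m₀`, half of `m μ ‖q‖²` absorbs the cross-term losses `(ρ / δ + (1 + ρ) / 2) ‖q‖²`
  refine ⟨μ / 2, by positivity, (2 * (ρ / δ) + ρ + 1) / μ, by positivity, fun m hm y => ?_⟩
  set c := eᵀ *ᵥ y
  set p := e *ᵥ c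
  set q := y - p
  have hy : y = p + q := (add_sub_cancel p y).symm
  have hq : eᵀ *ᵥ q = 0 := by
    simp only [q, p, c, mulVec_sub, mulVec_mulVec, ← Matrix.mul_assoc, he, Matrix.one_mul,
      sub_self]
  have hNp : N *ᵥ p = 0 := (hker p).mpr ⟨c, rfl⟩
  have hpRp : δ * (p ⬝ᵥ p) ≤ p ⬝ᵥ R *ᵥ p := by
    have hpp : p ⬝ᵥ p = c ⬝ᵥ c := by
      simpa [he] using (dotProduct_transpose_mul_mul_mulVec 1 e c).symm
    rw [hpp, ← dotProduct_transpose_mul_mul_mulVec]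
    exact hδη c
  have hyK : y ⬝ᵥ (m • N + R) *ᵥ y =
      m * (q ⬝ᵥ N *ᵥ q) + p ⬝ᵥ R *ᵥ p + 2 * (p ⬝ᵥ R *ᵥ q) + q ⬝ᵥ R *ᵥ q := by
    rw [hy]
    simp only [add_mulVec, mulVec_add, dotProduct_add, add_dotProduct, smul_mulVec,
      dotProduct_smul, smul_eq_mul, hNp, dotProduct_zero, hN.1.isSymm.dotProduct_mulVec_comm p q,
      hR.dotProduct_mulVec_comm q p]
    ring
  have hpRq := neg_le_two_mul_dotProduct p (R *ᵥ q) hδ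
  have hqRq := neg_le_two_mul_dotProduct q (R *ᵥ q) one_pos
  have hRq : R *ᵥ q ⬝ᵥ R *ᵥ q / δ ≤ ρ / δ * (q ⬝ᵥ q) := by
    rw [div_mul_eq_mul_div]
    exact div_le_div_of_nonneg_right (hρR q) hδ.le
  have hmμ := mul_le_mul_of_nonneg_right ((div_le_iff₀ hμ).mp hm) (dotProduct_self_nonneg q)
  have hmN := mul_le_mul_of_nonneg_left (hμN q hq) (le_trans (by positivity) hm)
  rw [hyK]
  linarith [hρR q]

theorem dotProduct_inv_mulVec_le [DecidableEq k] {K : Matrix k k ℝ} (hK : IsUnit K.det)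
    {e : Matrix k l ℝ} {a : ℝ} (ha : 0 < a)
    (hlow : ∀ y, a * ((y - e *ᵥ (eᵀ *ᵥ y)) ⬝ᵥ (y - e *ᵥ (eᵀ *ᵥ y))) ≤ y ⬝ᵥ K *ᵥ y)
    {z : k → ℝ} (hz : eᵀ *ᵥ z = 0) : z ⬝ᵥ K⁻¹ *ᵥ z ≤ (z ⬝ᵥ z) / a := by
  set w := K⁻¹ *ᵥ z
  set q := w - e *ᵥ (eᵀ *ᵥ w)
  have hzw : z ⬝ᵥ w = w ⬝ᵥ K *ᵥ w := by
    rw [mulVec_mulVec, mul_nonsing_inv K hK, one_mulVec, dotProduct_comm]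
  have hzq : z ⬝ᵥ q = z ⬝ᵥ w := by
    rw [dotProduct_sub, dotProduct_mulVec z e, ← mulVec_transpose, hz, zero_dotProduct, sub_zero]
  have hlow' := hlow w
  have hamgm := neg_le_two_mul_dotProduct q (-z) ha
  rw [dotProduct_neg, neg_dotProduct, dotProduct_neg, neg_neg, dotProduct_comm q z, hzq]
    at hamgm
  linarith

theorem exists_dotProduct_inv_sub_le [DecidableEq k] [DecidableEq l] {N R : Matrix k k ℝ}
    {e : Matrix k l ℝ} (hN : N.PosSemidef) (hker : ∀ x, N *ᵥ x = 0 ↔ ∃ c, x = e *ᵥ c)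
    (he : eᵀ * e = 1) (hR : R.IsSymm) (hη : (eᵀ * R * e).PosDef) :
    ∃ C > 0, ∃ m₀ > 0, ∀ m ≥ m₀, (m • N + R).PosDef → ∀ v,
      0 ≤ v ⬝ᵥ ((m • N + R)⁻¹ - e * (eᵀ * R * e)⁻¹ * eᵀ) *ᵥ v ∧
      v ⬝ᵥ ((m • N + R)⁻¹ - e * (eᵀ * R * e)⁻¹ * eᵀ) *ᵥ v ≤ C / m * (v ⬝ᵥ v) := by
  obtain ⟨a, ha, m₀, hm₀, hlow⟩ := exists_mul_le_dotProduct_smul_add_mulVec hN hker he hR hη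
  set M := 1 - R * e * (eᵀ * R * e)⁻¹ * eᵀ
  obtain ⟨ρ, hρ, hρM⟩ := exists_dotProduct_mulVec_self_le M
  refine ⟨(ρ + 1) / a, by positivity, m₀, hm₀, fun m hm hK v => ?_⟩
  have hNe : N * e = 0 := ext_iff_mulVec.mpr fun c => by
    rw [← mulVec_mulVec, zero_mulVec, (hker _).mpr ⟨c, rfl⟩]
  have hKe : (m • N + R) * e = R * e := by
    rw [Matrix.add_mul, Matrix.smul_mul, hNe, smul_zero, zero_add]
  have hG : eᵀ * (m • N + R) * e = eᵀ * R * e := by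
    rw [Matrix.mul_assoc, hKe, ← Matrix.mul_assoc]
  have hKdet : IsUnit (m • N + R).det := (isUnit_iff_isUnit_det _).mp hK.isUnit
  have hηdet : IsUnit (eᵀ * R * e).det := (isUnit_iff_isUnit_det _).mp hη.isUnit
  have hschur := inv_sub_eq_transpose_mul_inv_mul hK.1.isSymm hKdet e (hG ▸ hηdet)
  have hMe := transpose_mul_one_sub_eq_zero (m • N + R) e (hG ▸ hηdet)
  rw [hG, hKe] at hschur hMe
  rw [hschur, dotProduct_transpose_mul_mul_mulVec]
  have hm0 : 0 < m := hm₀.trans_le hm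
  refine ⟨by simpa using hK.inv.posSemidef.dotProduct_mulVec_nonneg (M *ᵥ v), ?_⟩
  calc M *ᵥ v ⬝ᵥ (m • N + R)⁻¹ *ᵥ (M *ᵥ v) ≤ (M *ᵥ v ⬝ᵥ M *ᵥ v) / (a * m) :=
        dotProduct_inv_mulVec_le hKdet (by positivity) (hlow m hm)
          (by rw [mulVec_mulVec, hMe, zero_mulVec])
    _ ≤ (ρ * (v ⬝ᵥ v)) / (a * m) := by gcongr; exact hρM v
    _ ≤ (ρ + 1) / a / m * (v ⬝ᵥ v) := by
        rw [div_div, div_mul_eq_mul_div]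
        gcongr
        · exact dotProduct_self_nonneg v
        · linarith

end Matrix

/-- If `K m = m • N + R` is SPD, `N` symmetric PSD with 3-dimensional kernel `range e`
(`e` with orthonormal columns), `R` symmetric and `η = eᵀ R e` SPD, then the inverse of the
principal square root satisfies `K(m)^{-1/2} = e η^{-1/2} eᵀ + O(m^{-1/2})`. -/
theorem stmt5 (n : ℕ) (N R : Matrix (Fin n) (Fin n) ℝ)
    (e : Matrix (Fin n) (Fin 3) ℝ)
    (hN : N.PosSemidef)
    (he : eᵀ * e = 1)
    (hker : ∀ x : Fin n → ℝ, N.mulVec x = 0 ↔ ∃ c : Fin 3 → ℝ, x = e.mulVec c)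
    (hR : R.IsSymm)
    (K : ℝ → Matrix (Fin n) (Fin n) ℝ)
    (hK : ∀ m : ℝ, K m = m • N + R)
    (hKpd : ∀ m : ℝ, 1 ≤ m → (K m).PosDef)
    (η : Matrix (Fin 3) (Fin 3) ℝ) (hη : η = eᵀ * R * e)
    (hηpd : η.PosDef) :
    ∃ C > 0, ∃ m₀ > 0, ∀ m : ℝ, ∀ hm : 1 ≤ m, m₀ ≤ m →
      ‖((hKpd m hm).posSemidef.sqrt)⁻¹ - e * (hηpd.posSemidef.sqrt)⁻¹ * eᵀ‖
        ≤ C / Real.sqrt m := by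
  subst hη
  obtain ⟨C, hC, m₀, hm₀, hbound⟩ := exists_dotProduct_inv_sub_le hN hker he hR hηpd
  refine ⟨n * (n * √C) + 1, by positivity, m₀, hm₀, fun m hm hm₀m => ?_⟩
  have hKm : (m • N + R).PosDef := hK m ▸ hKpd m hm
  rw [(hKpd m hm).inv_sqrt, hηpd.inv_sqrt, hK m]
  set S := CFC.sqrt (m • N + R)⁻¹
  set W := CFC.sqrt (eᵀ * R * e)⁻¹
  have hS : S.PosSemidef := (CFC.sqrt_nonneg _).posSemidef
  have hT : (e * W * eᵀ).PosSemidef := by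
    simpa using (CFC.sqrt_nonneg (eᵀ * R * e)⁻¹).posSemidef.mul_mul_conjTranspose_same e
  have hSS : S * S = (m • N + R)⁻¹ := CFC.sqrt_mul_sqrt_self _ hKm.inv.posSemidef.nonneg
  have hTT : e * W * eᵀ * (e * W * eᵀ) = e * (eᵀ * R * e)⁻¹ * eᵀ := by
    rw [show e * W * eᵀ * (e * W * eᵀ) = e * (W * (eᵀ * e) * W) * eᵀ by
      simp only [Matrix.mul_assoc], he, Matrix.mul_one,
      CFC.sqrt_mul_sqrt_self _ hηpd.inv.posSemidef.nonneg]
  have hmpos : 0 < m := hm₀.trans_le hm₀m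
  calc ‖S - e * W * eᵀ‖ ≤ n * (n * √(C / m)) := by
        simpa using hS.norm_sub_le_of_sq_sub_sq hT
          (fun v => hSS ▸ hTT ▸ (hbound m hm₀m hKm v).1)
          (fun v => hSS ▸ hTT ▸ (hbound m hm₀m hKm v).2)
    _ = n * (n * √C) / √m := by rw [Real.sqrt_div' C hmpos.le]; ring
    _ ≤ (n * (n * √C) + 1) / √m := by gcongr; linarith
end
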